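/- (Theorem 2.7.) Let n = 2. Fix t_0 ∈ ℂ and an integer k ≥ 2, and suppose some point x of the fibre over t_0 lies in Φ_k(X), i.e. rank M^{X,s}_k(t_0, u) ≤ 2k for some s ∈ {1,2} and u ∈ ℂ. Then: (i) if u ≠ 0 (i.e. x is distinct from both points p_1 and p_2), the whole fibre over t_0 lies in Φ_k(X): rank M^{X,σ}_k(t_0, w) ≤ 2k for every σ ∈ {1,2} and every w ∈ ℂ; (ii) if u = 0 (i.e. x = p_s), then either the whole fibre over t_0 lies in Φ_k(X) (in the same sense), or rank M^s_k(t_0) ≤ k (i.e. p_s ∈ Φ_k(C_s)). -/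

import Mathlib

/-!
In every chart the rows of `M^{X,s}_k(t,u)` span `D + ⟨v⟩`, where `D = Σ_i ι_i(Osc^{k-1} C_i)`
does not depend on the point of the fibre and `v` is the row of `k`-th derivatives of that point.
So the point is in `Φ_k(X)` iff `dim D < 2k` or `v ∈ D`. If `dim D < 2k`, the whole fibre is
inflectional. If `v ∈ D`, projecting onto the blocks gives `a_s^{(k)} ∈ Osc^{k-1} C_s`, so
`p_s ∈ Φ_k(C_s)`, and `u_i a_i^{(k)} ∈ Osc^{k-1} C_i`; when `u_i ≠ 0` every `k`-th derivative row
lies in `D`, hence so does the row `v` of every point of the fibre.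
-/

open Matrix

/-- The `k`-th jet matrix `M^i_k(t)` of a parametrized curve. -/
noncomputable def curveJet (r : ℕ) (a : ℂ → Fin (r + 1) → ℂ) (k : ℕ) (t : ℂ) :
    Matrix (Fin (k + 1)) (Fin (r + 1)) ℂ :=
  Matrix.of fun l j => iteratedDeriv (l : ℕ) (fun s => a s j) t

/-- The `i`-th block inclusion `ι_i : ℂ^{r_i+1} → V`. -/
noncomputable def blockIncl {n : ℕ} (r : Fin n → ℕ) (i : Fin n)
    (v : Fin (r i + 1) → ℂ) : (Σ j : Fin n, Fin (r j + 1)) → ℂ :=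
  fun p => if h : p.1 = i then v (Fin.cast (by rw [h]) p.2) else 0

/-- The `k`-th jet matrix `M^{X,s}_k(t,u)` of the decomposable scroll. -/
noncomputable def scrollJet {n : ℕ} (r : Fin n → ℕ)
    (a : ∀ i : Fin n, ℂ → Fin (r i + 1) → ℂ) (k : ℕ) (s : Fin n) (t : ℂ)
    (u : Fin n → ℂ) :
    Matrix (Fin (k + 1) ⊕ ({i : Fin n // i ≠ s} × Fin k))
      (Σ j : Fin n, Fin (r j + 1)) ℂ :=
  Matrix.of fun row =>
    match row with
    | Sum.inl l =>
        blockIncl r s (curveJet (r s) (a s) k t l) +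
          ∑ i ∈ Finset.univ.filter (fun i => i ≠ s),
            u i • blockIncl r i (curveJet (r i) (a i) k t l)
    | Sum.inr q =>
        blockIncl r q.1.1 (curveJet (r q.1.1) (a q.1.1) k t q.2.castSucc)

/-- The row space of a matrix, i.e. the span of its rows. -/
noncomputable def rowSpace {m α : Type*} [Fintype m] (M : Matrix m α ℂ) : Submodule ℂ (α → ℂ) :=
  Submodule.span ℂ (Set.range fun i => M i)

theorem Submodule.finrank_sup_span_singleton_le_iff {K V : Type*} [DivisionRing K]
    [AddCommGroup V] [Module K V] [Module.Finite K V] {p : Submodule K V} {v : V} {m : ℕ}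
    (hp : Module.finrank K p ≤ m) :
    Module.finrank K ↥(p ⊔ Submodule.span K {v}) ≤ m ↔ Module.finrank K p < m ∨ v ∈ p := by
  by_cases hv : v ∈ p
  · rw [sup_eq_left.2 ((Submodule.span_singleton_le_iff_mem v p).2 hv)]
    simp [hv, hp]
  · rw [Submodule.finrank_sup_span_singleton hv]
    simp only [hv, or_false]
    omega

theorem rank_eq_finrank_rowSpace {m α : Type*} [Fintype m] [Fintype α] (M : Matrix m α ℂ) :
    M.rank = Module.finrank ℂ (rowSpace M) := by
  rw [Matrix.rank_eq_finrank_span_row]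
  rfl

theorem rank_le_of_last_row_mem_rowSpace {α : Type*} [Fintype α] {k : ℕ}
    (M : Matrix (Fin (k + 1)) α ℂ)
    (h : M (Fin.last k) ∈ rowSpace (M.submatrix Fin.castSucc id)) : M.rank ≤ k := by
  have hle : rowSpace M ≤ rowSpace (M.submatrix Fin.castSucc id) := by
    refine Submodule.span_le.2 ?_
    rintro _ ⟨l, rfl⟩
    induction l using Fin.lastCases with
    | last => exact h
    | cast l => exact Submodule.subset_span ⟨l, rfl⟩
  calc M.rank = Module.finrank ℂ (rowSpace M) := rank_eq_finrank_rowSpace M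
    _ ≤ Module.finrank ℂ (rowSpace (M.submatrix Fin.castSucc id)) := Submodule.finrank_mono hle
    _ = (M.submatrix Fin.castSucc id).rank := (rank_eq_finrank_rowSpace _).symm
    _ ≤ Fintype.card (Fin k) := Matrix.rank_le_card_height _
    _ = k := Fintype.card_fin k

section Blocks

variable {n : ℕ} (r : Fin n → ℕ)

noncomputable def blockInclₗ (i : Fin n) :
    (Fin (r i + 1) → ℂ) →ₗ[ℂ] (Σ j : Fin n, Fin (r j + 1)) → ℂ where
  toFun := blockIncl r i
  map_add' v w := by
    funext p
    by_cases h : p.1 = i <;> simp [blockIncl, h]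
  map_smul' c v := by
    funext p
    by_cases h : p.1 = i <;> simp [blockIncl, h]

@[simp]
theorem blockInclₗ_apply (i : Fin n) (v : Fin (r i + 1) → ℂ) :
    blockInclₗ r i v = blockIncl r i v := rfl

noncomputable def blockProj (i : Fin n) :
    ((Σ j : Fin n, Fin (r j + 1)) → ℂ) →ₗ[ℂ] Fin (r i + 1) → ℂ :=
  LinearMap.funLeft ℂ ℂ (Sigma.mk (β := fun j => Fin (r j + 1)) i)

@[simp]
theorem blockProj_blockIncl_self (i : Fin n) (v : Fin (r i + 1) → ℂ) :
    blockProj r i (blockIncl r i v) = v := by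
  funext j
  simp [blockProj, blockIncl]

@[simp]
theorem blockProj_blockIncl_of_ne {i j : Fin n} (h : j ≠ i) (v : Fin (r j + 1) → ℂ) :
    blockProj r i (blockIncl r j v) = 0 := by
  funext l
  simp [blockProj, blockIncl, Ne.symm h]

end Blocks

section Scroll

variable {n : ℕ} (r : Fin n → ℕ) (a : ∀ i : Fin n, ℂ → Fin (r i + 1) → ℂ) (k : ℕ) (t : ℂ)

/-- The affine cone over `Osc^{k-1}` (not `Osc^k`) of `C_i`. -/
noncomputable def oscCone (i : Fin n) : Submodule ℂ (Fin (r i + 1) → ℂ) :=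
  rowSpace ((curveJet (r i) (a i) k t).submatrix Fin.castSucc id)

noncomputable def scrollOscCone : Submodule ℂ ((Σ j : Fin n, Fin (r j + 1)) → ℂ) :=
  ⨆ i, (oscCone r a k t i).map (blockInclₗ r i)

theorem scrollJet_inl (s : Fin n) (u : Fin n → ℂ) (l : Fin (k + 1)) :
    scrollJet r a k s t u (Sum.inl l) =
      blockIncl r s (curveJet (r s) (a s) k t l) +
        ∑ i ∈ Finset.univ.filter (fun i => i ≠ s),
          u i • blockIncl r i (curveJet (r i) (a i) k t l) :=
  rfl

variable {r a k t} in
theorem blockIncl_mem_scrollOscCone {i : Fin n} {v : Fin (r i + 1) → ℂ}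
    (hv : v ∈ oscCone r a k t i) : blockIncl r i v ∈ scrollOscCone r a k t :=
  Submodule.mem_iSup_of_mem i (Submodule.mem_map_of_mem hv)

theorem curveJet_castSucc_mem_oscCone (i : Fin n) (l : Fin k) :
    curveJet (r i) (a i) k t l.castSucc ∈ oscCone r a k t i :=
  Submodule.subset_span ⟨l, rfl⟩

theorem rowSpace_scrollJet (s : Fin n) (u : Fin n → ℂ) :
    rowSpace (scrollJet r a k s t u) =
      scrollOscCone r a k t ⊔ Submodule.span ℂ {scrollJet r a k s t u (Sum.inl (Fin.last k))} := by
  have hrow : ∀ row, scrollJet r a k s t u row ∈ rowSpace (scrollJet r a k s t u) :=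
    fun row => Submodule.subset_span ⟨row, rfl⟩
  have hlow : ∀ i (l : Fin k),
      blockIncl r i (curveJet (r i) (a i) k t l.castSucc) ∈ scrollOscCone r a k t :=
    fun i l => blockIncl_mem_scrollOscCone (curveJet_castSucc_mem_oscCone r a k t i l)
  apply le_antisymm
  · refine Submodule.span_le.2 ?_
    rintro _ ⟨row | q, rfl⟩
    · induction row using Fin.lastCases with
      | last => exact Submodule.mem_sup_right (Submodule.mem_span_singleton_self _)
      | cast l =>
        rw [scrollJet_inl]
        exact Submodule.mem_sup_left (Submodule.add_mem _ (hlow s l)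
          (Submodule.sum_mem _ fun i _ => Submodule.smul_mem _ _ (hlow i l)))
    · exact Submodule.mem_sup_left (hlow q.1.1 q.2)
  · refine sup_le (iSup_le fun i => ?_) ((Submodule.span_singleton_le_iff_mem _ _).2 (hrow _))
    rw [oscCone, rowSpace, Submodule.map_span, Submodule.span_le]
    rintro _ ⟨_, ⟨l, rfl⟩, rfl⟩
    change blockIncl r i (curveJet (r i) (a i) k t l.castSucc) ∈ _
    by_cases hi : i = s
    · subst hi
      have hsum : ∑ j ∈ Finset.univ.filter (fun j => j ≠ i),
          u j • blockIncl r j (curveJet (r j) (a j) k t l.castSucc) ∈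
            rowSpace (scrollJet r a k i t u) :=
        Submodule.sum_mem _ fun j hj => Submodule.smul_mem _ _
          (hrow (Sum.inr ⟨⟨j, (Finset.mem_filter.1 hj).2⟩, l⟩))
      simpa [scrollJet_inl] using Submodule.sub_mem _ (hrow (Sum.inl l.castSucc)) hsum
    · exact hrow (Sum.inr ⟨⟨i, hi⟩, l⟩)

theorem blockProj_scrollJet_inl_self (s : Fin n) (u : Fin n → ℂ) (l : Fin (k + 1)) :
    blockProj r s (scrollJet r a k s t u (Sum.inl l)) = curveJet (r s) (a s) k t l := by
  rw [scrollJet_inl, map_add, map_sum, blockProj_blockIncl_self, Finset.sum_eq_zero, add_zero]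
  intro j hj
  rw [map_smul, blockProj_blockIncl_of_ne r (Finset.mem_filter.1 hj).2, smul_zero]

theorem blockProj_scrollJet_inl_of_ne {i s : Fin n} (h : i ≠ s) (u : Fin n → ℂ)
    (l : Fin (k + 1)) :
    blockProj r i (scrollJet r a k s t u (Sum.inl l)) = u i • curveJet (r i) (a i) k t l := by
  rw [scrollJet_inl, map_add, map_sum, blockProj_blockIncl_of_ne r h.symm, zero_add,
    Finset.sum_eq_single_of_mem i (by simp [h]), map_smul, blockProj_blockIncl_self]
  intro j _ hji
  rw [map_smul, blockProj_blockIncl_of_ne r hji, smul_zero]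

variable {r a k t} in
theorem blockProj_mem_oscCone {x : (Σ j : Fin n, Fin (r j + 1)) → ℂ}
    (hx : x ∈ scrollOscCone r a k t) (i : Fin n) : blockProj r i x ∈ oscCone r a k t i := by
  have hle : scrollOscCone r a k t ≤ (oscCone r a k t i).comap (blockProj r i) := by
    refine iSup_le fun j => Submodule.map_le_iff_le_comap.2 fun y hy => ?_
    by_cases hji : j = i
    · subst hji
      simpa using hy
    · simp [blockProj_blockIncl_of_ne r hji]
  exact hle hx

variable {r a k t} in
theorem scrollJet_last_mem_scrollOscCone
    (h : ∀ i, curveJet (r i) (a i) k t (Fin.last k) ∈ oscCone r a k t i)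
    (s : Fin n) (u : Fin n → ℂ) :
    scrollJet r a k s t u (Sum.inl (Fin.last k)) ∈ scrollOscCone r a k t := by
  rw [scrollJet_inl]
  exact Submodule.add_mem _ (blockIncl_mem_scrollOscCone (h s))
    (Submodule.sum_mem _ fun i _ => Submodule.smul_mem _ _ (blockIncl_mem_scrollOscCone (h i)))

theorem finrank_scrollOscCone_le_rank (s : Fin n) (u : Fin n → ℂ) :
    Module.finrank ℂ (scrollOscCone r a k t) ≤ (scrollJet r a k s t u).rank := by
  rw [rank_eq_finrank_rowSpace, rowSpace_scrollJet]
  exact Submodule.finrank_mono le_sup_left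

variable {r a k t} in
theorem rank_scrollJet_le_iff {m : ℕ} (hD : Module.finrank ℂ (scrollOscCone r a k t) ≤ m)
    (s : Fin n) (u : Fin n → ℂ) :
    (scrollJet r a k s t u).rank ≤ m ↔
      Module.finrank ℂ (scrollOscCone r a k t) < m ∨
        scrollJet r a k s t u (Sum.inl (Fin.last k)) ∈ scrollOscCone r a k t := by
  rw [rank_eq_finrank_rowSpace, rowSpace_scrollJet]
  exact Submodule.finrank_sup_span_singleton_le_iff hD

end Scroll

theorem statement13_general (r : Fin 2 → ℕ)
    (a : ∀ i : Fin 2, ℂ → Fin (r i + 1) → ℂ)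
    (t0 : ℂ) (k : ℕ) (s : Fin 2) (u : Fin 2 → ℂ)
    (hx : (scrollJet r a k s t0 u).rank ≤ 2 * k) :
    ((∀ i, i ≠ s → u i ≠ 0) →
      ∀ (σ : Fin 2) (w : Fin 2 → ℂ), (scrollJet r a k σ t0 w).rank ≤ 2 * k) ∧
    ((∀ i, i ≠ s → u i = 0) →
      ((∀ (σ : Fin 2) (w : Fin 2 → ℂ), (scrollJet r a k σ t0 w).rank ≤ 2 * k) ∨
        (curveJet (r s) (a s) k t0).rank ≤ k)) := by
  have hD := (finrank_scrollOscCone_le_rank r a k t0 s u).trans hx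
  rcases (rank_scrollJet_le_iff hD s u).1 hx with hlt | hmem
  · have hfibre : ∀ σ w, (scrollJet r a k σ t0 w).rank ≤ 2 * k :=
      fun σ w => (rank_scrollJet_le_iff hD σ w).2 (Or.inl hlt)
    exact ⟨fun _ => hfibre, fun _ => Or.inl hfibre⟩
  · have hs : curveJet (r s) (a s) k t0 (Fin.last k) ∈ oscCone r a k t0 s := by
      simpa [blockProj_scrollJet_inl_self] using blockProj_mem_oscCone hmem s
    refine ⟨fun hu σ w => (rank_scrollJet_le_iff hD σ w).2 (Or.inr ?_),
      fun _ => Or.inr (rank_le_of_last_row_mem_rowSpace _ hs)⟩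
    refine scrollJet_last_mem_scrollOscCone (fun i => ?_) σ w
    by_cases hi : i = s
    · exact hi ▸ hs
    · have hui := blockProj_mem_oscCone hmem i
      rw [blockProj_scrollJet_inl_of_ne r a k t0 hi] at hui
      exact (Submodule.smul_mem_iff _ (hu i hi)).1 hui

/-- Theorem 2.7: let `n = 2` and suppose the fibre point `x` over
`t0` with chart coordinates `(s, u)` lies in `Φ_k(X)`. (i) If `x ≠ p_1, p_2`
(i.e. `u_i ≠ 0` for `i ≠ s`), then the whole fibre lies in `Φ_k(X)`; (ii) if
`x = p_s` (i.e. `u_i = 0` for `i ≠ s`), then either the whole fibre lies in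
`Φ_k(X)` or `p_s ∈ Φ_k(C_s)`. -/
theorem statement13 (r : Fin 2 → ℕ) (hr : ∀ i, 1 ≤ r i)
    (a : ∀ i : Fin 2, ℂ → Fin (r i + 1) → ℂ)
    (hent : ∀ i j, Differentiable ℂ fun t => a i t j)
    (hnd : ∀ i t, (curveJet (r i) (a i) 1 t).rank = 2)
    (t0 : ℂ) (k : ℕ) (hk : 2 ≤ k) (s : Fin 2) (u : Fin 2 → ℂ)
    (hx : (scrollJet r a k s t0 u).rank ≤ 2 * k) :
    ((∀ i, i ≠ s → u i ≠ 0) →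
      ∀ (σ : Fin 2) (w : Fin 2 → ℂ), (scrollJet r a k σ t0 w).rank ≤ 2 * k) ∧
    ((∀ i, i ≠ s → u i = 0) →
      ((∀ (σ : Fin 2) (w : Fin 2 → ℂ), (scrollJet r a k σ t0 w).rank ≤ 2 * k) ∨
        (curveJet (r s) (a s) k t0).rank ≤ k)) :=
  statement13_general r a t0 k s u hx
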